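/- arXiv:1412.2467 — 3 statements merged into one kernel-verified Lean document; each statement's English description precedes it below -/
import Mathlib

section
/- Let A be a commutative unital ring, let π be an ideal of A, and let n ≥ 3. For all x, y ∈ A, all z ∈ π, and all indices k ≠ l, the (k,l)-suspension of the symbol S(x,y;z) lies in the normal elementary subgroup E_n(π). -/
open Matrix

/-- `SL n A` is the special linear group `SL_n(A)`. -/
abbrev SL (n : ℕ) (A : Type) [CommRing A] : Type := Matrix.SpecialLinearGroup (Fin n) A

/-- The elementary matrix `e_{ij}(a) = 1_n + a·e_{ij}` as an element of `SL_n(A)` (for `i ≠ j`). -/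
def elem (A : Type) [CommRing A] {n : ℕ} (i j : Fin n) (hij : i ≠ j) (a : A) : SL n A :=
  ⟨Matrix.transvection i j a, Matrix.det_transvection_of_ne i j hij a⟩

/-- The (absolute) elementary subgroup `E_n(A)`: the subgroup of `SL_n(A)` generated by all
elementary matrices. -/
def EgrpAbs (A : Type) [CommRing A] (n : ℕ) : Subgroup (SL n A) :=
  Subgroup.closure {x | ∃ (i j : Fin n) (hij : i ≠ j) (a : A), x = elem A i j hij a}

/-- The normal (relative) elementary subgroup `E_n(π)`: the normal subgroup of `E_n(A)`
generated by the elementary matrices with coefficients in `π`, viewed inside `SL_n(A)`;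
as a subgroup of `SL_n(A)` it is generated by all `E_n(A)`-conjugates of the elementary
matrices with coefficients in `π`. -/
def Egrp (A : Type) [CommRing A] (n : ℕ) (π : Ideal A) : Subgroup (SL n A) :=
  Subgroup.closure {x | ∃ g ∈ EgrpAbs A n, ∃ (i j : Fin n) (hij : i ≠ j), ∃ a ∈ π,
    x = g * elem A i j hij a * g⁻¹}

/-- The `(k,l)`-suspension of the symbol `S(x,y;z)`: the matrix obtained from the identity
matrix `1_n` by grafting `1+xyz` in the `(k,k)`-entry, `-x²z` in the `(k,l)`-entry,
`y²z` in the `(l,k)`-entry and `1-xyz` in the `(l,l)`-entry. -/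
def suspMat (A : Type) [CommRing A] {n : ℕ} (k l : Fin n) (x y z : A) :
    Matrix (Fin n) (Fin n) A := fun p q =>
  if p = k ∧ q = k then 1 + x * y * z
  else if p = k ∧ q = l then -(x ^ 2 * z)
  else if p = l ∧ q = k then y ^ 2 * z
  else if p = l ∧ q = l then 1 - x * y * z
  else if p = q then 1 else 0

lemma suspMat_eq (A : Type) [CommRing A] {n : ℕ} (k l : Fin n) (hkl : k ≠ l) (x y z : A) :
    suspMat A k l x y z =
      1 + Matrix.replicateCol (Fin 1) (fun p => if p = k then x * z else if p = l then y * z else 0) *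
        Matrix.replicateRow (Fin 1) (fun q => if q = k then y else if q = l then -x else 0) := by
  ext p q
  simp only [suspMat, Matrix.add_apply, Matrix.mul_apply, Matrix.replicateCol_apply, Matrix.replicateRow_apply,
    Finset.univ_unique, Finset.sum_singleton, Matrix.one_apply]
  split_ifs <;> simp_all <;> ring

lemma suspMat_det (A : Type) [CommRing A] {n : ℕ} (k l : Fin n) (hkl : k ≠ l) (x y z : A) :
    (suspMat A k l x y z).det = 1 := by
  rw [suspMat_eq A k l hkl]
  refine (Matrix.det_one_add_replicateCol_mul_replicateRow _ _).trans ?_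
  have : (fun q => if q = k then y else if q = l then -x else 0) ⬝ᵥ
      (fun p => if p = k then x * z else if p = l then y * z else 0) = 0 := by
    unfold dotProduct
    have h : ∀ q : Fin n, (if q = k then y else if q = l then -x else 0) *
        (if q = k then x * z else if q = l then y * z else 0)
        = (if q = k then y * (x * z) else 0) + (if q = l then -x * (y * z) else 0) := by
      intro q
      split_ifs with h1 h2 <;> simp_all
    simp only [h, Finset.sum_add_distrib, Finset.sum_ite_eq', Finset.mem_univ, if_true]
    ring
  rw [this, add_zero]

/-- The `(k,l)`-suspension of the symbol `S(x,y;z)` as an element of `SL_n(A)` (for `k ≠ l`). -/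
def suspS (A : Type) [CommRing A] {n : ℕ} (k l : Fin n) (hkl : k ≠ l) (x y z : A) : SL n A :=
  ⟨suspMat A k l x y z, suspMat_det A k l hkl x y z⟩

/-!
The suspended symbol is the rank-one transvection `1 + v wᵀ` with `v = z (x eₖ + y eₗ)` and
`w = y eₖ - x eₗ`, where `w ⬝ᵥ v = 0`. Since `n ≥ 3` there is a third index `m`; with `e = eₘ`,
`1 + v wᵀ` is the commutator of `P = 1 + v eᵀ` and `Q = 1 + e wᵀ`. Now `P` is a product of two
elementary matrices with entries in `π` and `Q` one of two elementary matrices in `E_n(A)`, so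
`P · (Q P⁻¹ Q⁻¹) ∈ E_n(π)`.
-/

theorem one_add_mul_one_add_mul_one_sub {R : Type*} [Ring R] {a b : R} (haa : a * a = 0)
    (hba : b * a = 0) (habb : a * b * b = 0) :
    (1 + a) * (1 + b) * (1 - a) = (1 + a * b) * (1 + b) :=
  calc (1 + a) * (1 + b) * (1 - a) = 1 + b + a * b - a * a - b * a - a * (b * a) := by
        noncomm_ring
    _ = 1 + b + a * b + a * b * b := by simp only [haa, hba, habb, mul_zero, sub_zero, add_zero]
    _ = (1 + a * b) * (1 + b) := by noncomm_ring

section RankOne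

variable {R : Type*} [CommRing R] {ι : Type*} [DecidableEq ι]

theorem transvection_eq_one_add_vecMulVec_single_one_right (i j : ι) (c : R) :
    transvection i j c = 1 + vecMulVec (Pi.single i c) (Pi.single j 1) := by
  ext p q
  simp only [transvection, Matrix.add_apply, vecMulVec_apply, Pi.single_apply, single_apply]
  split_ifs <;> simp_all

theorem transvection_eq_one_add_vecMulVec_single_one_left (i j : ι) (c : R) :
    transvection i j c = 1 + vecMulVec (Pi.single i 1) (Pi.single j c) := by
  ext p q
  simp only [transvection, Matrix.add_apply, vecMulVec_apply, Pi.single_apply, single_apply]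
  split_ifs <;> simp_all

variable [Fintype ι]

theorem one_add_vecMulVec_mul_one_add_vecMulVec {a b c d : ι → R} (hbc : b ⬝ᵥ c = 0) :
    (1 + vecMulVec a b) * (1 + vecMulVec c d) = 1 + (vecMulVec a b + vecMulVec c d) := by
  rw [mul_add, add_mul, add_mul, vecMulVec_mul_vecMulVec, hbc, zero_smul, vecMulVec_zero]
  noncomm_ring

theorem one_add_vecMulVec_mul_one_add_vecMulVec_mul_one_sub_vecMulVec {v w e : ι → R}
    (hee : e ⬝ᵥ e = 1) (hev : e ⬝ᵥ v = 0) (hwe : w ⬝ᵥ e = 0) (hwv : w ⬝ᵥ v = 0) :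
    (1 + vecMulVec v e) * (1 + vecMulVec e w) * (1 - vecMulVec v e) =
      (1 + vecMulVec v w) * (1 + vecMulVec e w) := by
  have hab : vecMulVec v e * vecMulVec e w = vecMulVec v w := by
    rw [vecMulVec_mul_vecMulVec, hee, one_smul]
  rw [← hab]
  refine one_add_mul_one_add_mul_one_sub ?_ ?_ ?_ <;>
    simp only [hab, vecMulVec_mul_vecMulVec, hev, hwe, hwv, zero_smul, vecMulVec_zero]

theorem transvection_mul_transvection_same_col {i j m : ι} (hjm : j ≠ m) (a b : R) :
    transvection i m a * transvection j m b =
      1 + vecMulVec (Pi.single i a + Pi.single j b) (Pi.single m 1) := by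
  rw [transvection_eq_one_add_vecMulVec_single_one_right,
    transvection_eq_one_add_vecMulVec_single_one_right,
    one_add_vecMulVec_mul_one_add_vecMulVec (by simp [hjm]), add_vecMulVec]

theorem transvection_mul_transvection_same_row {i j m : ι} (hmi : m ≠ i) (a b : R) :
    transvection m i a * transvection m j b =
      1 + vecMulVec (Pi.single m 1) (Pi.single i a + Pi.single j b) := by
  rw [transvection_eq_one_add_vecMulVec_single_one_left,
    transvection_eq_one_add_vecMulVec_single_one_left,
    one_add_vecMulVec_mul_one_add_vecMulVec (by simp [hmi]), vecMulVec_add]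

end RankOne

variable {A : Type} [CommRing A] {n : ℕ}

theorem suspMat_eq_one_add_vecMulVec {k l : Fin n} (hkl : k ≠ l) (x y z : A) :
    suspMat A k l x y z =
      1 + vecMulVec (Pi.single k (x * z) + Pi.single l (y * z))
        (Pi.single k y + Pi.single l (-x)) := by
  ext p q
  simp only [suspMat, Matrix.add_apply, one_apply, vecMulVec_apply, Pi.add_apply, Pi.single_apply]
  split_ifs <;> simp_all <;> ring

theorem elem_mem_egrpAbs (i j : Fin n) (hij : i ≠ j) (a : A) : elem A i j hij a ∈ EgrpAbs A n :=
  Subgroup.subset_closure ⟨i, j, hij, a, rfl⟩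

theorem elem_mem_egrp {π : Ideal A} (i j : Fin n) (hij : i ≠ j) {a : A} (ha : a ∈ π) :
    elem A i j hij a ∈ Egrp A n π :=
  Subgroup.subset_closure ⟨1, one_mem _, i, j, hij, a, ha, by simp⟩

theorem conj_mem_egrp {π : Ideal A} {g h : SL n A} (hg : g ∈ EgrpAbs A n) (hh : h ∈ Egrp A n π) :
    g * h * g⁻¹ ∈ Egrp A n π := by
  suffices Egrp A n π ≤ (Egrp A n π).comap (MulAut.conj g).toMonoidHom from this hh
  refine Subgroup.closure_le _ |>.mpr ?_
  rintro _ ⟨g', hg', i, j, hij, a, ha, rfl⟩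
  refine Subgroup.subset_closure ⟨g * g', mul_mem hg hg', i, j, hij, a, ha, ?_⟩
  simp only [MulEquiv.coe_toMonoidHom, MulAut.conj_apply]
  group

theorem suspS_eq_mul_conj {k l m : Fin n} (hkl : k ≠ l) (hmk : m ≠ k) (hml : m ≠ l) (x y z : A) :
    suspS A k l hkl x y z =
      (elem A k m hmk.symm (x * z) * elem A l m hml.symm (y * z)) *
        ((elem A m k hmk y * elem A m l hml (-x)) *
          (elem A k m hmk.symm (-(x * z)) * elem A l m hml.symm (-(y * z))) *
          (elem A m k hmk y * elem A m l hml (-x))⁻¹) := by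
  set v : Fin n → A := Pi.single k (x * z) + Pi.single l (y * z)
  set w : Fin n → A := Pi.single k y + Pi.single l (-x)
  set e : Fin n → A := Pi.single m 1
  set P := elem A k m hmk.symm (x * z) * elem A l m hml.symm (y * z)
  set P' := elem A k m hmk.symm (-(x * z)) * elem A l m hml.symm (-(y * z))
  set Q := elem A m k hmk y * elem A m l hml (-x)
  have hS : (suspS A k l hkl x y z : Matrix (Fin n) (Fin n) A) = 1 + vecMulVec v w :=
    suspMat_eq_one_add_vecMulVec hkl x y z
  have hP : (P : Matrix (Fin n) (Fin n) A) = 1 + vecMulVec v e :=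
    transvection_mul_transvection_same_col hml.symm _ _
  have hP' : (P' : Matrix (Fin n) (Fin n) A) = 1 - vecMulVec v e := by
    rw [sub_eq_add_neg, ← neg_vecMulVec, neg_add, ← Pi.single_neg, ← Pi.single_neg]
    exact transvection_mul_transvection_same_col hml.symm _ _
  have hQ : (Q : Matrix (Fin n) (Fin n) A) = 1 + vecMulVec e w :=
    transvection_mul_transvection_same_row hmk _ _
  have hSQ : suspS A k l hkl x y z * Q = P * Q * P' := Subtype.ext <| by
    change (suspS A k l hkl x y z : Matrix (Fin n) (Fin n) A) * Q = P * Q * P'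
    rw [hS, hP, hP', hQ]
    refine (one_add_vecMulVec_mul_one_add_vecMulVec_mul_one_sub_vecMulVec ?_ ?_ ?_ ?_).symm
    · simp [e]
    · simp [v, e, hmk, hml]
    · simp [w, e, hmk, hml]
    · simp [v, w, hkl, hkl.symm]
      ring
  rw [eq_mul_inv_of_mul_eq hSQ]
  group

/-- For `n ≥ 3`, `x, y ∈ A`, `z ∈ π` and `k ≠ l`, the `(k,l)`-suspension of the symbol
`S(x,y;z)` lies in the normal elementary subgroup `E_n(π)`. -/
theorem suspension_mem_normalElementary (A : Type) [CommRing A] (π : Ideal A) (n : ℕ)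
    (hn : 3 ≤ n) (x y z : A) (hz : z ∈ π) (k l : Fin n) (hkl : k ≠ l) :
    suspS A k l hkl x y z ∈ Egrp A n π := by
  obtain ⟨m, hmk, hml⟩ := Fin.exists_ne_and_ne_of_two_lt k l hn
  have hxz : x * z ∈ π := π.mul_mem_left x hz
  have hyz : y * z ∈ π := π.mul_mem_left y hz
  have hQ : elem A m k hmk y * elem A m l hml (-x) ∈ EgrpAbs A n :=
    mul_mem (elem_mem_egrpAbs _ _ _ _) (elem_mem_egrpAbs _ _ _ _)
  rw [suspS_eq_mul_conj hkl hmk hml]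
  refine mul_mem (mul_mem (elem_mem_egrp _ _ _ hxz) (elem_mem_egrp _ _ _ hyz))
    (conj_mem_egrp hQ (mul_mem ?_ ?_))
  · exact elem_mem_egrp _ _ _ (π.neg_mem hxz)
  · exact elem_mem_egrp _ _ _ (π.neg_mem hyz)
end

section
/- Let A be a commutative unital ring, let π be an ideal of A, and let n ≥ 2. Then Γ_n(π) = E_n(π)·Γ_n(π²), i.e., every element of Γ_n(π) is a product of an element of E_n(π) and an element of Γ_n(π²). -/
open Matrix

/-- The principal congruence subgroup `Γ_n(π) = {g ∈ SL_n(A) : g ≡ 1_n mod π}`, as a set. -/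
def Γset (A : Type) [CommRing A] (n : ℕ) (π : Ideal A) : Set (SL n A) :=
  {g | ∀ p q : Fin n, (g : Matrix (Fin n) (Fin n) A) p q - (1 : Matrix (Fin n) (Fin n) A) p q ∈ π}

/-! Reduction modulo `π²` makes `g ↦ g - 1` a homomorphism from `Γ_n(π)` to the additive
group of matrices over `π/π²`, since the cross term `(g - 1)(h - 1)` of `gh - 1` has entries in
`π²`; its kernel is `Γ_n(π²)`. The image of `E_n(π)` contains every `a·e_ij` with `i ≠ j` and,
through the conjugate `e_ki(1) e_ik(a) e_ki(-1)`, every `a·(e_ii - e_kk)`; hence it contains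
`X - tr(X)·e_kk` for every `X` with entries in `π/π²`. So for `g ∈ Γ_n(π)` there is
`e ∈ E_n(π)` with `e⁻¹g ≡ 1 + t·e_kk mod π²`, and `det (e⁻¹g) = 1` forces `t = 0`. -/

section Matrices

variable {ι B : Type*} [Fintype ι]

theorem mul_eq_zero_of_forall_mem_of_sq_eq_bot [CommRing B] {J : Ideal B} (hJ : J ^ 2 = ⊥)
    {X Y : Matrix ι ι B} (hX : ∀ i j, X i j ∈ J) (hY : ∀ i j, Y i j ∈ J) : X * Y = 0 := by
  ext i j
  refine Finset.sum_eq_zero fun l _ => ?_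
  have hmem : X i l * Y l j ∈ J ^ 2 := pow_two J ▸ Ideal.mul_mem_mul (hX i l) (hY l j)
  rwa [hJ, Ideal.mem_bot] at hmem

variable [DecidableEq ι]

theorem sub_single_trace_mem [AddCommGroup B] (R : AddSubgroup (Matrix ι ι B)) (S : Set B)
    (k : ι) (h_off : ∀ i j, i ≠ j → ∀ x ∈ S, single i j x ∈ R)
    (h_diag : ∀ i, ∀ x ∈ S, single i i x - single k k x ∈ R)
    {X : Matrix ι ι B} (hX : ∀ i j, X i j ∈ S) : X - single k k X.trace ∈ R := by
  have hrow : ∀ i, ∑ j, single i j (X i j) - single k k (X i i) ∈ R := fun i => by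
    rw [← Finset.add_sum_erase _ _ (Finset.mem_univ i), add_sub_right_comm]
    exact add_mem (h_diag i _ (hX i i))
      (sum_mem fun j hj => h_off i j (Finset.ne_of_mem_erase hj).symm _ (hX i j))
  have hsplit :
      X - single k k X.trace = ∑ i, (∑ j, single i j (X i j) - single k k (X i i)) := by
    rw [Finset.sum_sub_distrib, ← matrix_eq_sum_single, trace, ← singleAddMonoidHom_apply,
      map_sum]
    rfl
  exact hsplit ▸ sum_mem fun i _ => hrow i

theorem det_one_add_single [CommRing B] (k : ι) (t : B) : (1 + single k k t).det = 1 + t := by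
  rw [← diagonal_single, ← diagonal_one, diagonal_add, det_diagonal,
    Finset.prod_eq_single k (fun i _ hi => by simp [hi]) (by simp)]
  simp

end Matrices

def Γgrp (A : Type) [CommRing A] (n : ℕ) (π : Ideal A) : Subgroup (SL n A) :=
  (Matrix.SpecialLinearGroup.map (Ideal.Quotient.mk π)).ker

def subOneModSq {A : Type} [CommRing A] {n : ℕ} (π : Ideal A) (g : SL n A) :
    Matrix (Fin n) (Fin n) (A ⧸ π ^ 2) :=
  (Matrix.SpecialLinearGroup.map (Ideal.Quotient.mk (π ^ 2)) g : Matrix (Fin n) (Fin n) _) - 1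

variable {A : Type} [CommRing A] {n : ℕ} {π : Ideal A}

theorem mem_Γgrp {g : SL n A} : g ∈ Γgrp A n π ↔ g ∈ Γset A n π := by
  rw [Γgrp, MonoidHom.mem_ker, ← map_one (Matrix.SpecialLinearGroup.map (Ideal.Quotient.mk π))]
  refine (Matrix.SpecialLinearGroup.ext_iff _ _).trans ?_
  simp only [Γset, Matrix.SpecialLinearGroup.map_apply_coe, RingHom.mapMatrix_apply, map_apply,
    Matrix.SpecialLinearGroup.coe_one, Ideal.Quotient.eq]
  rfl

theorem Γset_mono {I J : Ideal A} (hIJ : I ≤ J) : Γset A n I ⊆ Γset A n J :=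
  fun _ hg p q => hIJ (hg p q)

theorem coe_map_elem {B : Type*} [CommRing B] (f : A →+* B) {i j : Fin n} (hij : i ≠ j) (a : A) :
    (Matrix.SpecialLinearGroup.map f (elem A i j hij a) : Matrix (Fin n) (Fin n) B) =
      1 + single i j (f a) := by
  change f.mapMatrix (transvection i j a) = _
  rw [transvection, map_add, map_one, RingHom.mapMatrix_apply, map_single]

theorem elem_inv {i j : Fin n} (hij : i ≠ j) (a : A) :
    (elem A i j hij a)⁻¹ = elem A i j hij (-a) :=
  inv_eq_of_mul_eq_one_right <| Subtype.ext <| by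
    change transvection i j a * transvection i j (-a) = 1
    rw [transvection_mul_transvection_same _ _ hij, add_neg_cancel, transvection_zero]

theorem elem_mem_Γgrp {i j : Fin n} (hij : i ≠ j) {a : A} (ha : a ∈ π) :
    elem A i j hij a ∈ Γgrp A n π := by
  rw [Γgrp, MonoidHom.mem_ker, Matrix.SpecialLinearGroup.ext_iff, coe_map_elem,
    Ideal.Quotient.eq_zero_iff_mem.mpr ha]
  simp

theorem elem_mem_EgrpAbs {i j : Fin n} (hij : i ≠ j) (a : A) :
    elem A i j hij a ∈ EgrpAbs A n :=
  Subgroup.subset_closure ⟨i, j, hij, a, rfl⟩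

theorem conj_elem_mem_Egrp {y : SL n A} (hy : y ∈ EgrpAbs A n) {i j : Fin n} (hij : i ≠ j)
    {a : A} (ha : a ∈ π) : y * elem A i j hij a * y⁻¹ ∈ Egrp A n π :=
  Subgroup.subset_closure ⟨y, hy, i, j, hij, a, ha, rfl⟩

theorem elem_mem_Egrp {i j : Fin n} (hij : i ≠ j) {a : A} (ha : a ∈ π) :
    elem A i j hij a ∈ Egrp A n π := by
  simpa using conj_elem_mem_Egrp (one_mem _) hij ha

theorem Egrp_le_Γgrp : Egrp A n π ≤ Γgrp A n π := by
  rw [Egrp, Subgroup.closure_le]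
  rintro _ ⟨y, -, i, j, hij, a, ha, rfl⟩
  exact (MonoidHom.normal_ker _).conj_mem _ (elem_mem_Γgrp hij ha) y

theorem subOneModSq_apply (g : SL n A) (p q : Fin n) :
    subOneModSq π g p q =
      Ideal.Quotient.mk (π ^ 2) ((g : Matrix (Fin n) (Fin n) A) p q - (1 : Matrix _ _ A) p q) := by
  rw [subOneModSq, Matrix.sub_apply, map_sub]
  congr 1
  by_cases hpq : p = q <;> simp [one_apply, hpq]

theorem subOneModSq_eq_zero_iff {g : SL n A} :
    subOneModSq π g = 0 ↔ g ∈ Γset A n (π ^ 2) := by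
  simp only [← Matrix.ext_iff, subOneModSq_apply, Matrix.zero_apply,
    Ideal.Quotient.eq_zero_iff_mem]
  rfl

theorem subOneModSq_one : subOneModSq π (1 : SL n A) = 0 := by
  simp [subOneModSq]

theorem det_one_add_subOneModSq (g : SL n A) : (1 + subOneModSq π g).det = 1 := by
  rw [subOneModSq, add_sub_cancel]
  exact (Matrix.SpecialLinearGroup.map (Ideal.Quotient.mk (π ^ 2)) g).prop

theorem subOneModSq_elem {i j : Fin n} (hij : i ≠ j) (a : A) :
    subOneModSq π (elem A i j hij a) = single i j (Ideal.Quotient.mk (π ^ 2) a) := by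
  rw [subOneModSq, coe_map_elem, add_sub_cancel_left]

theorem subOneModSq_apply_mem {g : SL n A} (hg : g ∈ Γgrp A n π) (p q : Fin n) :
    subOneModSq π g p q ∈ π.map (Ideal.Quotient.mk (π ^ 2)) :=
  subOneModSq_apply g p q ▸ Ideal.mem_map_of_mem _ (mem_Γgrp.mp hg p q)

theorem map_quotient_sq_sq_eq_bot : (π.map (Ideal.Quotient.mk (π ^ 2))) ^ 2 = ⊥ := by
  rw [← Ideal.map_pow, Ideal.map_quotient_self]

theorem subOneModSq_mul {g h : SL n A} (hg : g ∈ Γgrp A n π) (hh : h ∈ Γgrp A n π) :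
    subOneModSq π (g * h) = subOneModSq π g + subOneModSq π h := by
  have hsq : subOneModSq π g * subOneModSq π h = 0 :=
    mul_eq_zero_of_forall_mem_of_sq_eq_bot map_quotient_sq_sq_eq_bot
      (subOneModSq_apply_mem hg) (subOneModSq_apply_mem hh)
  simp only [subOneModSq, map_mul, Matrix.SpecialLinearGroup.coe_mul] at hsq ⊢
  rw [← sub_eq_zero, ← hsq]
  noncomm_ring

theorem subOneModSq_inv {g : SL n A} (hg : g ∈ Γgrp A n π) :
    subOneModSq π g⁻¹ = -subOneModSq π g := by
  have h := subOneModSq_mul (inv_mem hg) hg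
  rw [inv_mul_cancel, subOneModSq_one] at h
  exact eq_neg_of_add_eq_zero_left h.symm

theorem subOneModSq_conj (y g : SL n A) :
    subOneModSq π (y * g * y⁻¹) =
      (1 + subOneModSq π y) * subOneModSq π g * (1 + subOneModSq π y⁻¹) := by
  simp only [subOneModSq, add_sub_cancel, map_mul, map_inv]
  generalize Matrix.SpecialLinearGroup.map (Ideal.Quotient.mk (π ^ 2)) y = Y
  generalize Matrix.SpecialLinearGroup.map (Ideal.Quotient.mk (π ^ 2)) g = G
  rw [Matrix.SpecialLinearGroup.coe_mul, Matrix.SpecialLinearGroup.coe_mul, mul_sub, sub_mul,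
    mul_one, ← Matrix.SpecialLinearGroup.coe_mul Y Y⁻¹, mul_inv_cancel,
    Matrix.SpecialLinearGroup.coe_one]

theorem subOneModSq_conj_elem {i k : Fin n} (hik : i ≠ k) (a : A) :
    subOneModSq π (elem A k i hik.symm 1 * elem A i k hik a * (elem A k i hik.symm 1)⁻¹) =
      single i k (Ideal.Quotient.mk (π ^ 2) a) + single k k (Ideal.Quotient.mk (π ^ 2) a) -
        single i i (Ideal.Quotient.mk (π ^ 2) a) - single k i (Ideal.Quotient.mk (π ^ 2) a) := by
  rw [subOneModSq_conj, elem_inv, subOneModSq_elem, subOneModSq_elem, subOneModSq_elem]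
  simp only [map_one, add_mul, one_mul, single_mul_single_same, map_neg, mul_add, mul_one,
    mul_neg]
  rw [← single_neg, ← single_neg]
  abel

variable (π) in
def subOneModSqEgrp : AddSubgroup (Matrix (Fin n) (Fin n) (A ⧸ π ^ 2)) where
  carrier := subOneModSq π '' Egrp A n π
  add_mem' := by
    rintro _ _ ⟨e, he, rfl⟩ ⟨f, hf, rfl⟩
    exact ⟨e * f, mul_mem he hf, subOneModSq_mul (Egrp_le_Γgrp he) (Egrp_le_Γgrp hf)⟩
  zero_mem' := ⟨1, one_mem _, subOneModSq_one⟩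
  neg_mem' := by
    rintro _ ⟨e, he, rfl⟩
    exact ⟨e⁻¹, inv_mem he, subOneModSq_inv (Egrp_le_Γgrp he)⟩

theorem single_mem_subOneModSqEgrp {i j : Fin n} (hij : i ≠ j) {x : A ⧸ π ^ 2}
    (hx : x ∈ π.map (Ideal.Quotient.mk (π ^ 2))) : single i j x ∈ subOneModSqEgrp π := by
  obtain ⟨a, ha, rfl⟩ := (Ideal.mem_map_iff_of_surjective _ Ideal.Quotient.mk_surjective).mp hx
  exact ⟨elem A i j hij a, elem_mem_Egrp hij ha, subOneModSq_elem hij a⟩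

theorem single_sub_single_mem_subOneModSqEgrp (i k : Fin n) {x : A ⧸ π ^ 2}
    (hx : x ∈ π.map (Ideal.Quotient.mk (π ^ 2))) :
    single i i x - single k k x ∈ subOneModSqEgrp π := by
  rcases eq_or_ne i k with rfl | hik
  · simp
  obtain ⟨a, ha, rfl⟩ := (Ideal.mem_map_iff_of_surjective _ Ideal.Quotient.mk_surjective).mp hx
  have hconj : subOneModSq π (elem A k i hik.symm 1 * elem A i k hik a *
      (elem A k i hik.symm 1)⁻¹) ∈ subOneModSqEgrp π :=
    ⟨_, conj_elem_mem_Egrp (elem_mem_EgrpAbs _ _) hik ha, rfl⟩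
  rw [subOneModSq_conj_elem] at hconj
  convert sub_mem (sub_mem (single_mem_subOneModSqEgrp hik hx)
    (single_mem_subOneModSqEgrp hik.symm hx)) hconj using 1
  abel

theorem exists_mem_Egrp_mul_mem_Γset_sq (k : Fin n) {g : SL n A} (hg : g ∈ Γset A n π) :
    ∃ e ∈ Egrp A n π, ∃ h ∈ Γset A n (π ^ 2), g = e * h := by
  rw [← mem_Γgrp] at hg
  obtain ⟨e, he, hδe⟩ : subOneModSq π g - single k k (subOneModSq π g).trace ∈
      subOneModSqEgrp π :=
    sub_single_trace_mem _ (π.map (Ideal.Quotient.mk (π ^ 2)) : Set (A ⧸ π ^ 2)) k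
      (fun _ _ hij _ hx => single_mem_subOneModSqEgrp hij hx)
      (fun i _ hx => single_sub_single_mem_subOneModSqEgrp i k hx) (subOneModSq_apply_mem hg)
  have heΓ := Egrp_le_Γgrp he
  have hδh : subOneModSq π (e⁻¹ * g) = single k k (subOneModSq π g).trace := by
    rw [subOneModSq_mul (inv_mem heΓ) hg, subOneModSq_inv heΓ, hδe]
    abel
  have htrace : (subOneModSq π g).trace = 0 := by
    have hdet := det_one_add_subOneModSq (π := π) (e⁻¹ * g)
    rwa [hδh, det_one_add_single, add_eq_left] at hdet
  refine ⟨e, he, e⁻¹ * g, subOneModSq_eq_zero_iff.mp ?_, by group⟩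
  rw [hδh, htrace, single_zero]

theorem gamma_eq_E_mul_gamma_sq_general (A : Type) [CommRing A] (π : Ideal A) (n : ℕ) :
    Γset A n π = {g | ∃ e ∈ Egrp A n π, ∃ h ∈ Γset A n (π ^ 2), g = e * h} := by
  ext g
  refine ⟨fun hg => ?_, ?_⟩
  · rcases isEmpty_or_nonempty (Fin n) with hn | ⟨⟨k⟩⟩
    · exact ⟨1, one_mem _, g, fun p => isEmptyElim p, (one_mul g).symm⟩
    · exact exists_mem_Egrp_mul_mem_Γset_sq k hg
  · rintro ⟨e, he, h, hh, rfl⟩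
    have hh' : h ∈ Γgrp A n π := mem_Γgrp.mpr (Γset_mono (Ideal.pow_le_self two_ne_zero) hh)
    exact mem_Γgrp.mp (mul_mem (Egrp_le_Γgrp he) hh')

/-- For `n ≥ 2`, `Γ_n(π) = E_n(π)·Γ_n(π²)`: every element of `Γ_n(π)` is a product of an
element of `E_n(π)` and an element of `Γ_n(π²)` (and conversely). -/
theorem gamma_eq_E_mul_gamma_sq (A : Type) [CommRing A] (π : Ideal A) (n : ℕ) (hn : 2 ≤ n) :
    Γset A n π = {g | ∃ e ∈ Egrp A n π, ∃ h ∈ Γset A n (π ^ 2), g = e * h} :=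
  gamma_eq_E_mul_gamma_sq_general A π n
end

section
/- Let A be a commutative unital ring, let π be an ideal of A, and let n ≥ 2. Then Δ_n(π) = F_n(π)·Γ_n(π²), i.e., every element of Δ_n(π) is a product of an element of F_n(π) and an element of Γ_n(π²). -/
open Matrix

/-- The true elementary subgroup `F_n(π)`: the subgroup of `SL_n(A)` generated by the
elementary matrices with coefficients in the ideal `π`. -/
def Fgrp (A : Type) [CommRing A] (n : ℕ) (π : Ideal A) : Subgroup (SL n A) :=
  Subgroup.closure {x | ∃ (i j : Fin n) (hij : i ≠ j), ∃ a ∈ π, x = elem A i j hij a}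

/-- The secondary congruence subgroup
`Δ_n(π) = {g ∈ SL_n(A) : g ≡ 1_n mod π, g_{ii} ≡ 1 mod π²}`, as a set. -/
def Δset (A : Type) [CommRing A] (n : ℕ) (π : Ideal A) : Set (SL n A) :=
  {g | (∀ p q : Fin n, (g : Matrix (Fin n) (Fin n) A) p q
          - (1 : Matrix (Fin n) (Fin n) A) p q ∈ π) ∧
       (∀ p : Fin n, (g : Matrix (Fin n) (Fin n) A) p p - 1 ∈ π ^ 2)}

/-!
Modulo `π²` the map `g ↦ g - 1` is additive on `Γ_n(π)`, because `(g - 1)(h - 1)` has entries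
in `π²`. So for `g ∈ Δ_n(π)`, whose `g - 1` has diagonal in `π²`, a product of the `e_{ij}(g_{ij})`
over `i ≠ j` agrees with `g` modulo `π²`. Conversely, the same identity shows that `Δ_n(π)` is a
subgroup, and it contains the generators of `F_n(π)` and all of `Γ_n(π²)`.
-/

namespace Ideal

variable {A : Type*} [CommRing A] {ι : Type*} [Fintype ι] [DecidableEq ι]

theorem mul_mem_matrix_mul {I J : Ideal A} {X Y : Matrix ι ι A} (hX : X ∈ I.matrix ι)
    (hY : Y ∈ J.matrix ι) : X * Y ∈ (I * J).matrix ι := fun p q => by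
  rw [mul_apply]
  exact Ideal.sum_mem _ fun k _ => mul_mem_mul (hX p k) (hY k q)

theorem mul_mem_matrix_pow_two {π : Ideal A} {X Y : Matrix ι ι A} (hX : X ∈ π.matrix ι)
    (hY : Y ∈ π.matrix ι) : X * Y ∈ (π ^ 2).matrix ι :=
  pow_two π ▸ mul_mem_matrix_mul hX hY

theorem single_mem_matrix {I : Ideal A} (i j : ι) {a : A} (ha : a ∈ I) :
    single i j a ∈ I.matrix ι := fun p q => by
  by_cases h : i = p ∧ j = q
  · obtain ⟨rfl, rfl⟩ := h
    simpa using ha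
  · rw [Matrix.single_apply_of_ne _ _ _ _ _ h]
    exact I.zero_mem

variable (ι) in
def secondaryMatrix (π : Ideal A) : AddSubgroup (Matrix ι ι A) where
  carrier := {X | X ∈ π.matrix ι ∧ ∀ i, X i i ∈ π ^ 2}
  add_mem' hX hY := ⟨(π.matrix ι).add_mem hX.1 hY.1, fun i => add_mem (hX.2 i) (hY.2 i)⟩
  zero_mem' := ⟨(π.matrix ι).zero_mem, fun _ => zero_mem _⟩
  neg_mem' hX := ⟨(π.matrix ι).neg_mem hX.1, fun i => neg_mem (hX.2 i)⟩

theorem matrix_pow_two_le_secondaryMatrix (π : Ideal A) :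
    ((π ^ 2).matrix ι : Set (Matrix ι ι A)) ⊆ π.secondaryMatrix ι := fun _ hX =>
  ⟨fun p q => pow_le_self two_ne_zero (hX p q), fun i => hX i i⟩

theorem mul_mem_secondaryMatrix {π : Ideal A} {X Y : Matrix ι ι A}
    (hX : X ∈ π.matrix ι) (hY : Y ∈ π.matrix ι) : X * Y ∈ π.secondaryMatrix ι :=
  matrix_pow_two_le_secondaryMatrix π (mul_mem_matrix_pow_two hX hY)

end Ideal

section

variable {A : Type} [CommRing A] {n : ℕ} {π : Ideal A}

local notation:1024 "↑ₘ" g:1024 => ((g : SL n A) : Matrix (Fin n) (Fin n) A)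

theorem mem_Γset_iff {g : SL n A} :
    g ∈ Γset A n π ↔ ↑ₘg - 1 ∈ π.matrix (Fin n) :=
  Iff.rfl

theorem mem_Δset_iff {g : SL n A} :
    g ∈ Δset A n π ↔ ↑ₘg - 1 ∈ π.secondaryMatrix (Fin n) :=
  and_congr Iff.rfl <| forall_congr' fun p => by rw [Matrix.sub_apply, one_apply_eq]

theorem coe_mul_sub_one (g h : SL n A) :
    ↑ₘ(g * h) - 1 = (↑ₘg - 1) + (↑ₘh - 1) + (↑ₘg - 1) * (↑ₘh - 1) := by
  rw [Matrix.SpecialLinearGroup.coe_mul]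
  noncomm_ring

variable (A n π) in
def deltaSubgroup : Subgroup (SL n A) where
  carrier := Δset A n π
  one_mem' := by simp [mem_Δset_iff, zero_mem]
  mul_mem' {g h} hg hh := by
    rw [mem_Δset_iff] at hg hh ⊢
    rw [coe_mul_sub_one]
    exact add_mem (add_mem hg hh) (Ideal.mul_mem_secondaryMatrix hg.1 hh.1)
  inv_mem' {g} hg := by
    rw [mem_Δset_iff] at hg ⊢
    have hinv : ↑ₘg⁻¹ - 1 = -(↑ₘg⁻¹ * (↑ₘg - 1)) := by
      rw [mul_sub, ← Matrix.SpecialLinearGroup.coe_mul, inv_mul_cancel]; simp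
    have hinv_mem : ↑ₘg⁻¹ - 1 ∈ π.matrix (Fin n) :=
      hinv ▸ neg_mem (Ideal.mul_mem_left _ _ hg.1)
    rw [hinv, show -(↑ₘg⁻¹ * (↑ₘg - 1)) = -(↑ₘg - 1) - (↑ₘg⁻¹ - 1) * (↑ₘg - 1) by noncomm_ring]
    exact sub_mem (neg_mem hg) (Ideal.mul_mem_secondaryMatrix hinv_mem hg.1)

theorem Γset_pow_two_subset_deltaSubgroup : Γset A n (π ^ 2) ⊆ deltaSubgroup A n π :=
  fun _ hg => mem_Δset_iff.mpr (Ideal.matrix_pow_two_le_secondaryMatrix π hg)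

theorem coe_elem_sub_one {i j : Fin n} (hij : i ≠ j) (a : A) :
    ↑ₘ(elem A i j hij a) - 1 = single i j a :=
  add_sub_cancel_left _ _

theorem Fgrp_le_deltaSubgroup : Fgrp A n π ≤ deltaSubgroup A n π := by
  refine Subgroup.closure_le _ |>.mpr ?_
  rintro _ ⟨i, j, hij, a, ha, rfl⟩
  show _ ∈ Δset A n π
  rw [mem_Δset_iff, coe_elem_sub_one]
  refine ⟨Ideal.single_mem_matrix i j ha, fun p => ?_⟩
  rw [Matrix.single_apply_of_ne _ _ _ _ _ fun h => hij (h.1.trans h.2.symm)]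
  exact zero_mem _

theorem exists_mem_Fgrp_sub_one_sub_mem {X : Matrix (Fin n) (Fin n) A}
    (hX : X ∈ π.secondaryMatrix (Fin n)) :
    ∃ e ∈ Fgrp A n π, ↑ₘe - 1 - X ∈ (π ^ 2).matrix (Fin n) := by
  set P : Matrix (Fin n) (Fin n) A → Prop :=
    fun Y => ∃ e ∈ Fgrp A n π, ↑ₘe - 1 - Y ∈ (π ^ 2).matrix (Fin n)
  have hzero : P 0 := ⟨1, one_mem _, by simp⟩
  have hadd : ∀ Y Z, P Y → P Z → P (Y + Z) := by
    rintro Y Z ⟨e, he, hY⟩ ⟨f, hf, hZ⟩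
    refine ⟨e * f, mul_mem he hf, ?_⟩
    rw [coe_mul_sub_one, show ∀ a b c : Matrix (Fin n) (Fin n) A,
      a + b + c - (Y + Z) = (a - Y) + (b - Z) + c by intros; abel]
    exact add_mem (add_mem hY hZ) (Ideal.mul_mem_matrix_pow_two
      (Fgrp_le_deltaSubgroup he).1 (Fgrp_le_deltaSubgroup hf).1)
  have hsingle : ∀ i j, P (single i j (X i j)) := by
    intro i j
    by_cases hij : i = j
    · subst hij
      exact ⟨1, one_mem _, by simpa using neg_mem (Ideal.single_mem_matrix i i (hX.2 i))⟩
    · refine ⟨elem A i j hij (X i j), Subgroup.subset_closure ⟨i, j, hij, _, hX.1 i j, rfl⟩, ?_⟩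
      rw [coe_elem_sub_one, sub_self]
      exact zero_mem _
  rw [matrix_eq_sum_single X]
  exact Finset.sum_induction _ P hadd hzero fun i _ =>
    Finset.sum_induction _ P hadd hzero fun j _ => hsingle i j

theorem inv_mul_mem_Γset_of_sub_mem {I : Ideal A} {e g : SL n A}
    (h : ↑ₘe - ↑ₘg ∈ I.matrix (Fin n)) : e⁻¹ * g ∈ Γset A n I := by
  have hsplit : ↑ₘ(e⁻¹ * g) - 1 = -(↑ₘe⁻¹ * (↑ₘe - ↑ₘg)) := by
    rw [Matrix.SpecialLinearGroup.coe_mul, mul_sub, ← Matrix.SpecialLinearGroup.coe_mul e⁻¹ e,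
      inv_mul_cancel]
    simp
  rw [mem_Γset_iff, hsplit]
  exact neg_mem (Ideal.mul_mem_left _ _ h)

end

theorem delta_eq_F_mul_gamma_sq_general (A : Type) [CommRing A] (π : Ideal A) (n : ℕ) :
    Δset A n π = {g | ∃ e ∈ Fgrp A n π, ∃ h ∈ Γset A n (π ^ 2), g = e * h} := by
  ext g
  constructor
  · intro hg
    obtain ⟨e, he, hge⟩ := exists_mem_Fgrp_sub_one_sub_mem (mem_Δset_iff.mp hg)
    refine ⟨e, he, e⁻¹ * g, inv_mul_mem_Γset_of_sub_mem ?_, (mul_inv_cancel_left e g).symm⟩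
    rwa [sub_sub_sub_cancel_right] at hge
  · rintro ⟨e, he, h, hh, rfl⟩
    exact mul_mem (Fgrp_le_deltaSubgroup he) (Γset_pow_two_subset_deltaSubgroup hh)

/-- For `n ≥ 2`, `Δ_n(π) = F_n(π)·Γ_n(π²)`: every element of `Δ_n(π)` is a product of an
element of `F_n(π)` and an element of `Γ_n(π²)` (and conversely). -/
theorem delta_eq_F_mul_gamma_sq (A : Type) [CommRing A] (π : Ideal A) (n : ℕ) (hn : 2 ≤ n) :
    Δset A n π = {g | ∃ e ∈ Fgrp A n π, ∃ h ∈ Γset A n (π ^ 2), g = e * h} :=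
  delta_eq_F_mul_gamma_sq_general A π n
end
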